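/- For a uniformly random binary sequence of length n with exactly n1 ones (n1 ≥ 2) and τ drawn uniformly from I_1(X), the probability of success at the selected trial satisfies P(X_t = 1 | τ = t) = ((n−1)/(n−2))·(n1/n − 1/(n−1)) for 2 ≤ t ≤ n−1, and P(X_n = 1 | τ = n) = n1/n. -/

import Mathlib

open Finset

/-- Probability weight of a Bernoulli(p) binary sequence. -/
def wgt {n : ℕ} (p : ℝ) (x : Fin n → Bool) : ℝ :=
  ∏ i, if x i then p else 1 - p

/-- The set of trials that immediately follow `k` consecutive successes. -/
def streakSet {n : ℕ} (k : ℕ) (x : Fin n → Bool) : Finset (Fin n) :=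
  Finset.univ.filter (fun i : Fin n =>
    k ≤ i.val ∧ ∀ j : Fin n, i.val - k ≤ j.val → j.val < i.val → x j = true)

/-- The proportion of successes on the trials that immediately follow `k`
consecutive successes. -/
noncomputable def phat {n : ℕ} (k : ℕ) (x : Fin n → Bool) : ℝ :=
  (∑ i ∈ streakSet k x, if x i then (1:ℝ) else 0) / ((streakSet k x).card : ℝ)

/-- Number of successes in the sequence. -/
def ones {n : ℕ} (x : Fin n → Bool) : ℕ :=
  (Finset.univ.filter (fun i => x i = true)).card

/-! Identify a sequence with its set of ones. The trials following a success are the successors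
of the ones other than the last trial, so `#(streakSet 1 x)` is `n₁ - 1` or `n₁` according as
`x` ends in a success or not. Splitting each sum by the value of the last trial therefore turns it
into counts of `n₁`-sets containing and avoiding prescribed positions, i.e. binomial coefficients,
and the two ratios follow from the recurrences `C(m+1,k+1)(k+1) = C(m+1,k)(m+1-k)` and
`C(m,k)(m+1) = C(m+1,k)(m+1-k)`. -/

lemma Finset.card_filter_card_eq_subset_disjoint {α : Type*} [Fintype α] [DecidableEq α]
    (A B : Finset α) (hAB : Disjoint A B) (k : ℕ) :
    #{s : Finset α | #s = #A + k ∧ A ⊆ s ∧ Disjoint s B}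
      = (Fintype.card α - #A - #B).choose k := by
  have hfilter : ({s : Finset α | #s = #A + k ∧ A ⊆ s ∧ Disjoint s B} : Finset (Finset α))
      = (Bᶜ.powersetCard (#A + k)).filter (A ⊆ ·) := by
    ext s
    simp only [mem_filter, mem_univ, true_and, mem_powersetCard, subset_compl_iff_disjoint_right]
    tauto
  rw [hfilter, card_filter_powersetCard_subset _ _ _ (subset_compl_iff_disjoint_right.2 hAB)
    (Nat.le_add_right _ _), card_compl, Nat.add_sub_cancel_left, Nat.sub_right_comm]

lemma card_ones_eq_choose {n : ℕ} (A B : Finset (Fin n)) (hAB : Disjoint A B) {k n₁ N : ℕ}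
    (hn₁ : #A + k = n₁) (hN : #A + #B + N = n) (Q : (Fin n → Bool) → Prop) [DecidablePred Q]
    (hQ : ∀ x, Q x ↔ (∀ i ∈ A, x i = true) ∧ ∀ i ∈ B, x i = false) :
    #{x : Fin n → Bool | ones x = n₁ ∧ Q x} = N.choose k := by
  have hcount := Finset.card_filter_card_eq_subset_disjoint A B hAB k
  rw [Fintype.card_fin, show n - #A - #B = N by omega] at hcount
  rw [← hcount, ← hn₁]
  refine card_nbij' (fun x => univ.filter (fun i => x i = true)) (fun s i => decide (i ∈ s))
    ?_ ?_ ?_ ?_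
  · intro x hx
    simp only [coe_filter, mem_univ, true_and, Set.mem_ofPred_eq, hQ] at hx ⊢
    refine ⟨hx.1, fun i hi => by simp [hx.2.1 i hi], disjoint_left.2 fun i hi hiB => ?_⟩
    simp [hx.2.2 i hiB] at hi
  · intro s hs
    simp only [coe_filter, mem_univ, true_and, Set.mem_ofPred_eq, hQ] at hs ⊢
    refine ⟨by simpa [ones] using hs.1, fun i hi => by simpa using hs.2.1 hi, fun i hi => ?_⟩
    simpa using disjoint_right.1 hs.2.2 hi
  · intro x _; funext i; simp
  · intro s _; ext i; simp

section

variable {m k : ℕ}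

lemma streakSet_one_eq_map (x : Fin (m + 1) → Bool) :
    streakSet 1 x = (univ.filter fun j : Fin m => x j.castSucc).map (Fin.succEmb m) := by
  ext i
  cases i using Fin.cases with
  | zero => simp [streakSet]
  | succ j =>
    simp only [streakSet, mem_filter, mem_univ, true_and, mem_map, Fin.coe_succEmb, Fin.succ_inj,
      exists_eq_right, Fin.val_succ]
    refine ⟨fun h => h.2 j.castSucc (by simp) (by simp),
      fun h => ⟨by omega, fun l h1 h2 => ?_⟩⟩
    rwa [show l = j.castSucc from Fin.ext (by simp; omega)]

lemma card_streakSet_one_add (x : Fin (m + 1) → Bool) :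
    #(streakSet 1 x) + (if x (Fin.last m) then 1 else 0) = ones x := by
  rw [streakSet_one_eq_map, card_map, ones, card_filter, card_filter, Fin.sum_univ_castSucc]

lemma sum_ite_inv_card_streakSet (n₁ : ℕ) (P : (Fin (m + 1) → Bool) → Prop)
    [DecidablePred P] :
    ∑ x : Fin (m + 1) → Bool, (if ones x = n₁ ∧ P x then (1:ℝ) / #(streakSet 1 x) else 0)
      = #{x | ones x = n₁ ∧ P x ∧ x (Fin.last m) = true} / ((n₁ : ℝ) - 1)
        + #{x | ones x = n₁ ∧ P x ∧ x (Fin.last m) = false} / n₁ := by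
  have hsplit : ∀ x : Fin (m + 1) → Bool,
      (if ones x = n₁ ∧ P x then (1:ℝ) / #(streakSet 1 x) else 0)
        = (if ones x = n₁ ∧ P x ∧ x (Fin.last m) = true then 1 / ((n₁ : ℝ) - 1) else 0)
          + (if ones x = n₁ ∧ P x ∧ x (Fin.last m) = false then 1 / (n₁ : ℝ) else 0) := by
    intro x
    have hcard := card_streakSet_one_add x
    by_cases hP : ones x = n₁ ∧ P x
    · obtain ⟨rfl, hP⟩ := hP
      cases hlast : x (Fin.last m)
      · simp_all
      · simp only [hlast, if_true] at hcard
        simp [hP, ← hcard]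
    · rw [if_neg hP, if_neg (by tauto), if_neg (by tauto), add_zero]
  simp_rw [hsplit, sum_add_distrib, ← sum_filter, sum_const, nsmul_eq_mul, mul_one_div]

lemma succ_mem_streakSet_one_iff (x : Fin (m + 1) → Bool) (j : Fin m) :
    j.succ ∈ streakSet 1 x ↔ x j.castSucc = true := by
  simp [streakSet_one_eq_map]

lemma sum_ite_mem_streakSet (a : Fin (m + 2)) :
    ∑ x : Fin (m + 3) → Bool,
        (if ones x = k + 2 ∧ a.succ ∈ streakSet 1 x then (1:ℝ) / #(streakSet 1 x) else 0)
      = (m + 1).choose k / ((k : ℝ) + 1) + (m + 1).choose (k + 1) / ((k : ℝ) + 2) := by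
  have hne := a.castSucc_ne_last
  have hL : #{x : Fin (m + 3) → Bool | ones x = k + 2 ∧ a.succ ∈ streakSet 1 x ∧
      x (Fin.last (m + 2)) = true} = (m + 1).choose k :=
    card_ones_eq_choose {a.castSucc, Fin.last _} ∅ (disjoint_empty_right _)
      (by rw [card_pair hne]; ring) (by rw [card_pair hne, card_empty]; ring) _
      (fun x => by simp [succ_mem_streakSet_one_iff])
  have hnotL : #{x : Fin (m + 3) → Bool | ones x = k + 2 ∧ a.succ ∈ streakSet 1 x ∧
      x (Fin.last (m + 2)) = false} = (m + 1).choose (k + 1) :=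
    card_ones_eq_choose {a.castSucc} {Fin.last _} (disjoint_singleton.2 hne)
      (by rw [card_singleton]; ring) (by rw [card_singleton, card_singleton]; ring) _
      (fun x => by simp [succ_mem_streakSet_one_iff])
  rw [sum_ite_inv_card_streakSet, hL, hnotL]
  push_cast
  ring

lemma sum_ite_mem_streakSet_and_of_ne_last (a : Fin (m + 2)) (ha : a ≠ Fin.last (m + 1)) :
    ∑ x : Fin (m + 3) → Bool,
        (if ones x = k + 2 ∧ a.succ ∈ streakSet 1 x ∧ x a.succ = true then
          (1:ℝ) / #(streakSet 1 x) else 0)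
      = ((m + 1).choose k - m.choose k) / ((k : ℝ) + 1) + m.choose k / ((k : ℝ) + 2) := by
  have hpair : a.castSucc ≠ a.succ := a.castSucc_lt_succ.ne
  have hne : a.castSucc ≠ Fin.last _ := a.castSucc_ne_last
  have hne' : a.succ ≠ Fin.last _ := (Fin.succ_ne_last_iff a).2 ha
  have hall : #{x : Fin (m + 3) → Bool | ones x = k + 2 ∧ a.succ ∈ streakSet 1 x ∧
      x a.succ = true} = (m + 1).choose k :=
    card_ones_eq_choose {a.castSucc, a.succ} ∅ (disjoint_empty_right _)
      (by rw [card_pair hpair]; ring) (by rw [card_pair hpair, card_empty]; ring) _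
      (fun x => by simp [succ_mem_streakSet_one_iff])
  have hnotL : #{x : Fin (m + 3) → Bool | ones x = k + 2 ∧ (a.succ ∈ streakSet 1 x ∧
      x a.succ = true) ∧ x (Fin.last (m + 2)) = false} = m.choose k :=
    card_ones_eq_choose {a.castSucc, a.succ} {Fin.last _}
      (disjoint_singleton_right.2 (by simp [hne.symm, hne'.symm]))
      (by rw [card_pair hpair]; ring) (by rw [card_pair hpair, card_singleton]; ring) _
      (fun x => by simp [succ_mem_streakSet_one_iff])
  -- Counted as a complement, since `n₁ = 2` leaves no room for three prescribed ones.
  have hL : #{x : Fin (m + 3) → Bool | ones x = k + 2 ∧ (a.succ ∈ streakSet 1 x ∧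
      x a.succ = true) ∧ x (Fin.last (m + 2)) = true} + m.choose k = (m + 1).choose k := by
    rw [← hall, ← hnotL, ← card_filter_add_card_filter_not
      (s := {x : Fin (m + 3) → Bool |
        ones x = k + 2 ∧ a.succ ∈ streakSet 1 x ∧ x a.succ = true})
      (fun x => x (Fin.last (m + 2)) = true)]
    simp [filter_filter, and_assoc]
  rw [sum_ite_inv_card_streakSet, hnotL, ← hL]
  push_cast
  ring

lemma sum_ite_mem_streakSet_and_last :
    ∑ x : Fin (m + 3) → Bool,
        (if ones x = k + 2 ∧ (Fin.last (m + 1)).succ ∈ streakSet 1 x ∧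
          x (Fin.last (m + 1)).succ = true then (1:ℝ) / #(streakSet 1 x) else 0)
      = (m + 1).choose k / ((k : ℝ) + 1) := by
  have hne : (Fin.last (m + 1)).castSucc ≠ Fin.last _ := Fin.castSucc_ne_last _
  have hL : #{x : Fin (m + 3) → Bool | ones x = k + 2 ∧
      ((Fin.last (m + 1)).succ ∈ streakSet 1 x ∧ x (Fin.last (m + 1)).succ = true) ∧
      x (Fin.last (m + 2)) = true} = (m + 1).choose k :=
    card_ones_eq_choose {(Fin.last (m + 1)).castSucc, Fin.last _} ∅ (disjoint_empty_right _)
      (by rw [card_pair hne]; ring) (by rw [card_pair hne, card_empty]; ring) _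
      (fun x => by rw [succ_mem_streakSet_one_iff]; simp)
  have hnotL : #{x : Fin (m + 3) → Bool | ones x = k + 2 ∧
      ((Fin.last (m + 1)).succ ∈ streakSet 1 x ∧ x (Fin.last (m + 1)).succ = true) ∧
      x (Fin.last (m + 2)) = false} = 0 := by
    rw [card_eq_zero, filter_eq_empty_iff]
    rintro x - ⟨-, ⟨-, hlast⟩, hlast'⟩
    rw [Fin.succ_last, hlast'] at hlast
    exact Bool.false_ne_true hlast
  rw [sum_ite_inv_card_streakSet, hL, hnotL]
  push_cast
  ring

lemma choose_div_add_choose_succ_div (hk : k ≤ m + 1) :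
    (m + 1).choose k / ((k : ℝ) + 1) + (m + 1).choose (k + 1) / ((k : ℝ) + 2)
      = (m + 1).choose k * (m + 3) / ((k + 1) * (k + 2)) := by
  have hrec : ((m + 1).choose (k + 1) : ℝ) * (k + 1) = (m + 1).choose k * (m + 1 - k) := by
    exact_mod_cast Nat.choose_succ_right_eq (m + 1) k
  field_simp
  linear_combination hrec

lemma choose_sub_choose_div_add_choose_div (hk : k ≤ m + 1) :
    ((m + 1).choose k - m.choose k) / ((k : ℝ) + 1) + m.choose k / ((k : ℝ) + 2)
      = (m + 1).choose k * (k + (m + 1) * (k + 1)) / ((m + 1) * (k + 1) * (k + 2)) := by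
  have hrec : (m.choose k : ℝ) * (m + 1) = (m + 1).choose k * (m + 1 - k) := by
    exact_mod_cast Nat.choose_mul_succ_eq m k
  field_simp
  linear_combination -hrec

end

/-- Exact conditional success probabilities at the selected trial, for interior and
terminal positions, for a uniformly random sequence with exactly n1 ones. -/
theorem stmt13 (n n1 : ℕ) (hn : 2 < n) (h1 : 2 ≤ n1) (h2 : n1 ≤ n)
    (t : Fin n) (ht : 1 ≤ t.val) :
    (t.val < n - 1 →
      (∑ x : Fin n → Bool,
          if ones x = n1 ∧ t ∈ streakSet 1 x ∧ x t = true then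
            (1:ℝ) / ((streakSet 1 x).card : ℝ) else 0) /
      (∑ x : Fin n → Bool,
          if ones x = n1 ∧ t ∈ streakSet 1 x then
            (1:ℝ) / ((streakSet 1 x).card : ℝ) else 0)
        = (((n : ℝ) - 1) / ((n : ℝ) - 2)) * ((n1 : ℝ) / n - 1 / ((n : ℝ) - 1))) ∧
    (t.val = n - 1 →
      (∑ x : Fin n → Bool,
          if ones x = n1 ∧ t ∈ streakSet 1 x ∧ x t = true then
            (1:ℝ) / ((streakSet 1 x).card : ℝ) else 0) /
      (∑ x : Fin n → Bool,
          if ones x = n1 ∧ t ∈ streakSet 1 x then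
            (1:ℝ) / ((streakSet 1 x).card : ℝ) else 0)
        = (n1 : ℝ) / n) := by
  obtain ⟨m, rfl⟩ : ∃ m, n = m + 3 := ⟨n - 3, by omega⟩
  obtain ⟨k, rfl⟩ : ∃ k, n1 = k + 2 := ⟨n1 - 2, by omega⟩
  obtain ⟨a, rfl⟩ : ∃ a : Fin (m + 2), a.succ = t :=
    Fin.exists_succ_eq.2 (by rintro rfl; simp at ht)
  have hk : k ≤ m + 1 := by omega
  have hpos : (0 : ℝ) < (m + 1).choose k := by exact_mod_cast Nat.choose_pos hk
  rw [sum_ite_mem_streakSet, choose_div_add_choose_succ_div hk]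
  refine ⟨fun hint => ?_, fun hlast => ?_⟩
  · have ha : a ≠ Fin.last (m + 1) := by rintro rfl; simp at hint
    rw [sum_ite_mem_streakSet_and_of_ne_last a ha, choose_sub_choose_div_add_choose_div hk]
    push_cast
    rw [show (m : ℝ) + 3 - 1 = m + 2 by ring, show (m : ℝ) + 3 - 2 = m + 1 by ring]
    field_simp
    ring
  · obtain rfl : a = Fin.last (m + 1) := Fin.ext (by simp at hlast ⊢; omega)
    rw [sum_ite_mem_streakSet_and_last]
    push_cast
    field_simp
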